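/- arXiv:1303.6911 — 7 statements merged into one kernel-verified Lean document; each statement's English description precedes it below -/
import Mathlib

section
/- Let G be a finite simple graph with minimum degree at least 3, and let a, b be two distinct vertices of G. Suppose the induced subgraph G−a,b has a connected component T that is a tree. If T has at most 3 vertices, or if T contains a vertex of degree two (in T) that is adjacent in T to a leaf of T, then G contains a triangle (three mutually adjacent vertices). -/
open scoped Classical

/-- Let G be a finite simple graph with minimum degree at least 3,
and let a, b be two distinct vertices. Suppose a connected component T of the
induced subgraph G−a,b is a tree. If T has at most 3 vertices, or T has a
vertex of degree two (in T) adjacent in T to a leaf of T, then G contains a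
triangle. -/
theorem stmt_0 {V : Type*} [Fintype V] (G : SimpleGraph V)
    (hmin : ∀ v : V, 3 ≤ G.degree v) (a b : V) (hab : a ≠ b)
    (c : (G.induce ({a, b}ᶜ : Set V)).ConnectedComponent)
    (hT : ((G.induce ({a, b}ᶜ : Set V)).induce c.supp).IsTree)
    (hcond : Fintype.card c.supp ≤ 3 ∨
      ∃ u v : c.supp,
        ((G.induce ({a, b}ᶜ : Set V)).induce c.supp).degree u = 2 ∧
        ((G.induce ({a, b}ᶜ : Set V)).induce c.supp).degree v = 1 ∧
        ((G.induce ({a, b}ᶜ : Set V)).induce c.supp).Adj u v) :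
    ∃ x y z : V, G.Adj x y ∧ G.Adj x z ∧ G.Adj y z := by
  classical
  set T := (G.induce ({a, b}ᶜ : Set V)).induce c.supp with hTdef
  -- the set of neighbors of u among {a,b}
  set S : V → Finset V := fun v => ({a, b} : Finset V) ∩ G.neighborFinset v with hSdef
  have hScard : ∀ v : V, (S v).card ≤ 2 := by
    intro v
    calc (S v).card ≤ ({a, b} : Finset V).card := Finset.card_le_card Finset.inter_subset_left
      _ ≤ 2 := Finset.card_insert_le _ _ |>.trans (by simp)
  -- Key: every vertex of the component has G-degree bounded by T-degree plus |S|.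
  have key : ∀ u : c.supp, 3 ≤ T.degree u + (S (↑↑u : V)).card := by
    intro u
    have h3 : 3 ≤ (G.neighborFinset (↑↑u : V)).card := hmin _
    have hsub : G.neighborFinset (↑↑u : V) ⊆
        (T.neighborFinset u).image (fun w => ((↑↑w : V))) ∪ S (↑↑u : V) := by
      intro w hw
      rw [SimpleGraph.mem_neighborFinset] at hw
      by_cases hwab : w = a ∨ w = b
      · refine Finset.mem_union_right _ ?_
        rw [hSdef]
        refine Finset.mem_inter.2 ⟨?_, by rwa [SimpleGraph.mem_neighborFinset]⟩
        rcases hwab with h | h <;> simp [h]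
      · push_neg at hwab
        have hwmem : w ∈ ({a, b}ᶜ : Set V) := by
          simp [Set.mem_compl_iff, hwab.1, hwab.2]
        have hadj' : (G.induce ({a, b}ᶜ : Set V)).Adj ↑u ⟨w, hwmem⟩ := hw
        have hwc : (⟨w, hwmem⟩ : ({a, b}ᶜ : Set V)) ∈ c.supp := by
          rw [SimpleGraph.ConnectedComponent.mem_supp_iff]
          have hu := u.2
          rw [SimpleGraph.ConnectedComponent.mem_supp_iff] at hu
          rw [← hu]
          exact (SimpleGraph.ConnectedComponent.sound hadj'.symm.reachable)
        refine Finset.mem_union_left _ ?_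
        refine Finset.mem_image.2 ⟨⟨⟨w, hwmem⟩, hwc⟩, ?_, rfl⟩
        rw [SimpleGraph.mem_neighborFinset]
        exact hadj'
    calc 3 ≤ (G.neighborFinset (↑↑u : V)).card := h3
      _ ≤ ((T.neighborFinset u).image (fun w => ((↑↑w : V))) ∪ S (↑↑u : V)).card :=
          Finset.card_le_card hsub
      _ ≤ ((T.neighborFinset u).image (fun w => ((↑↑w : V)))).card + (S (↑↑u : V)).card :=
          Finset.card_union_le _ _
      _ ≤ (T.neighborFinset u).card + (S (↑↑u : V)).card := by
          gcongr
          exact Finset.card_image_le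
      _ = T.degree u + (S (↑↑u : V)).card := by rw [T.card_neighborFinset_eq_degree]
  -- a leaf of T is adjacent to both a and b in G
  have hleaf : ∀ v : c.supp, T.degree v = 1 → G.Adj (↑↑v) a ∧ G.Adj (↑↑v) b := by
    intro v hv
    have hk := key v
    rw [hv] at hk
    have h2 : 2 ≤ (S (↑↑v : V)).card := by omega
    have hcab : ({a, b} : Finset V).card = 2 := by
      rw [Finset.card_insert_of_notMem (by simpa using hab), Finset.card_singleton]
    have heq : S (↑↑v : V) = ({a, b} : Finset V) :=
      Finset.eq_of_subset_of_card_le Finset.inter_subset_left (by omega)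
    constructor
    · have : a ∈ S (↑↑v : V) := heq ▸ (by simp)
      rw [hSdef, Finset.mem_inter, SimpleGraph.mem_neighborFinset] at this
      exact this.2
    · have : b ∈ S (↑↑v : V) := heq ▸ (by simp)
      rw [hSdef, Finset.mem_inter, SimpleGraph.mem_neighborFinset] at this
      exact this.2
  -- a vertex of T-degree ≤ 2 is adjacent to a or b
  have hdeg2 : ∀ u : c.supp, T.degree u ≤ 2 → ∃ x ∈ ({a, b} : Finset V), G.Adj (↑↑u) x := by
    intro u hu
    have hk := key u
    have h1 : 1 ≤ (S (↑↑u : V)).card := by omega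
    obtain ⟨x, hx⟩ := Finset.card_pos.1 h1
    rw [hSdef, Finset.mem_inter, SimpleGraph.mem_neighborFinset] at hx
    exact ⟨x, hx.1, hx.2⟩
  -- finisher: given an edge u-v of T with deg u ≤ 2 and deg v = 1, find a triangle
  have finish : ∀ u v : c.supp, T.Adj u v → T.degree u ≤ 2 → T.degree v = 1 →
      ∃ x y z : V, G.Adj x y ∧ G.Adj x z ∧ G.Adj y z := by
    intro u v huv hu hv
    obtain ⟨x, hx, hux⟩ := hdeg2 u hu
    have hva := hleaf v hv
    have hvx : G.Adj (↑↑v) x := by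
      rcases Finset.mem_insert.1 hx with h | h
      · rw [h]; exact hva.1
      · rw [Finset.mem_singleton] at h; rw [h]; exact hva.2
    have huvG : G.Adj (↑↑u) (↑↑v) := huv
    exact ⟨(↑↑u : V), (↑↑v : V), x, huvG, hux, hvx⟩
  rcases hcond with hcard | ⟨u, v, hu2, hv1, huv⟩
  · -- |T| ≤ 3 : find a leaf and its neighbor
    have hne : Nonempty c.supp := by
      obtain ⟨w, hw⟩ := c.exists_rep
      exact ⟨⟨w, by rw [SimpleGraph.ConnectedComponent.mem_supp_iff]; exact hw⟩⟩
    have hpos : 1 ≤ Fintype.card c.supp := Fintype.card_pos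
    -- there is a vertex of degree ≤ 1
    have hlow : ∃ v : c.supp, T.degree v ≤ 1 := by
      by_contra h
      push_neg at h
      have hsum : ∑ v : c.supp, T.degree v = 2 * T.edgeFinset.card :=
        T.sum_degrees_eq_twice_card_edges
      have hE : T.edgeFinset.card + 1 = Fintype.card c.supp := hT.card_edgeFinset
      have hge : 2 * Fintype.card c.supp ≤ ∑ v : c.supp, T.degree v := by
        calc 2 * Fintype.card c.supp = ∑ _v : c.supp, 2 := by
              rw [Finset.sum_const, Finset.card_univ]; ring
          _ ≤ ∑ v : c.supp, T.degree v := Finset.sum_le_sum (fun i _ => h i)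
      omega
    obtain ⟨v, hv⟩ := hlow
    have hv1 : T.degree v = 1 := by
      have hk := key v
      have := hScard (↑↑v : V)
      omega
    -- get the neighbor of v
    have hnb : ∃ u : c.supp, T.Adj v u := by
      have : 0 < (T.neighborFinset v).card := by
        rw [T.card_neighborFinset_eq_degree, hv1]; norm_num
      obtain ⟨u, hu⟩ := Finset.card_pos.1 this
      exact ⟨u, (SimpleGraph.mem_neighborFinset _ _ _).1 hu⟩
    obtain ⟨u, huv⟩ := hnb
    have hu2 : T.degree u ≤ 2 := by
      have hsub : T.neighborFinset u ⊆ Finset.univ.erase u := by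
        intro w hw
        refine Finset.mem_erase.2 ⟨?_, Finset.mem_univ _⟩
        intro hwu
        exact T.irrefl (hwu ▸ (SimpleGraph.mem_neighborFinset _ _ _).1 hw)
      have : (T.neighborFinset u).card ≤ Fintype.card c.supp - 1 := by
        calc (T.neighborFinset u).card ≤ (Finset.univ.erase u).card := Finset.card_le_card hsub
          _ = Fintype.card c.supp - 1 := by rw [Finset.card_erase_of_mem (Finset.mem_univ _), Finset.card_univ]
      rw [← T.card_neighborFinset_eq_degree]
      omega
    exact finish u v huv.symm hu2 hv1
  · exact finish u v huv (le_of_eq hu2) hv1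
end

section
/- Let G be a finite simple graph with at least 8 vertices and minimum degree at least 3. Suppose a and b are distinct non-adjacent vertices, each of degree 4 in G, and suppose the induced subgraph G−a,b has a connected component that is a star with four leaves (a tree on 5 vertices whose center is adjacent to the other four vertices). Then G is disconnected. -/
open scoped Classical

/-- Let G be a finite simple graph with at least 8 vertices and
minimum degree at least 3. Suppose a and b are distinct non-adjacent vertices,
each of degree 4, and the induced subgraph G−a,b has a connected component that
is a star with four leaves (a tree on 5 vertices whose center is adjacent to
the other four vertices). Then G is disconnected. -/
theorem stmt_7 {V : Type*} [Fintype V] (G : SimpleGraph V)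
    (hV : 8 ≤ Fintype.card V) (hmin : ∀ v : V, 3 ≤ G.degree v)
    (a b : V) (hab : a ≠ b) (hnadj : ¬ G.Adj a b)
    (hda : G.degree a = 4) (hdb : G.degree b = 4)
    (c : (G.induce ({a, b}ᶜ : Set V)).ConnectedComponent)
    (hcard : Fintype.card c.supp = 5)
    (hstar : ∃ x : c.supp,
      (∀ y : c.supp, y ≠ x →
        ((G.induce ({a, b}ᶜ : Set V)).induce c.supp).Adj x y) ∧
      (∀ y z : c.supp,
        ((G.induce ({a, b}ᶜ : Set V)).induce c.supp).Adj y z →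
          y = x ∨ z = x)) :
    ¬ G.Connected := by
  classical
  obtain ⟨x, hx1, hx2⟩ := hstar
  set f : c.supp → V := fun y => ((y : ({a, b}ᶜ : Set V)) : V) with hf
  have hfinj : Function.Injective f := by
    intro y z h
    apply Subtype.ext; apply Subtype.ext; exact h
  -- membership in the complement
  have hmemcompl : ∀ v : V, v ≠ a → v ≠ b → v ∈ ({a, b}ᶜ : Set V) := by
    intro v hva hvb
    simp [Set.mem_compl_iff, hva, hvb]
  -- closure of the component under adjacency
  have hKclosed : ∀ y : c.supp, ∀ v : V, G.Adj (f y) v →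
      v = a ∨ v = b ∨ ∃ h : v ∈ ({a, b}ᶜ : Set V),
        (⟨v, h⟩ : ({a, b}ᶜ : Set V)) ∈ c.supp := by
    intro y v hadj
    by_cases hva : v = a
    · exact Or.inl hva
    by_cases hvb : v = b
    · exact Or.inr (Or.inl hvb)
    refine Or.inr (Or.inr ⟨hmemcompl v hva hvb, ?_⟩)
    have hadj' : (G.induce ({a, b}ᶜ : Set V)).Adj (y : ({a, b}ᶜ : Set V))
        ⟨v, hmemcompl v hva hvb⟩ := hadj
    have hy : (y : ({a, b}ᶜ : Set V)) ∈ c.supp := y.2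
    rw [SimpleGraph.ConnectedComponent.mem_supp_iff] at hy ⊢
    rw [← hy]
    exact SimpleGraph.ConnectedComponent.sound hadj'.symm.reachable
  -- each leaf is adjacent to a, b, and x
  have hleaf : ∀ y : c.supp, y ≠ x →
      G.neighborFinset (f y) = {a, b, f x} := by
    intro y hyx
    have hsub : G.neighborFinset (f y) ⊆ {a, b, f x} := by
      intro v hv
      rw [SimpleGraph.mem_neighborFinset] at hv
      rcases hKclosed y v hv with h | h | ⟨h, hs⟩
      · simp [h]
      · simp [h]
      · have hadj2 : ((G.induce ({a, b}ᶜ : Set V)).induce c.supp).Adj y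
            ⟨⟨v, h⟩, hs⟩ := hv
        rcases hx2 y ⟨⟨v, h⟩, hs⟩ hadj2 with h1 | h1
        · exact absurd h1 hyx
        · have : v = f x := by rw [← h1]
          simp [this]
    have hcard3 : ({a, b, f x} : Finset V).card ≤ 3 := by
      have h1 := Finset.card_insert_le a ({b, f x} : Finset V)
      have h2 := Finset.card_insert_le b ({f x} : Finset V)
      have h3 : ({f x} : Finset V).card = 1 := Finset.card_singleton _
      omega
    have h3 : 3 ≤ (G.neighborFinset (f y)).card := by
      rw [SimpleGraph.card_neighborFinset_eq_degree]
      exact hmin (f y)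
    exact Finset.eq_of_subset_of_card_le hsub (le_trans hcard3 h3)
  -- the leaf set
  set L : Finset V := (Finset.univ.image f).erase (f x) with hL
  have hLcard : L.card = 4 := by
    rw [hL, Finset.card_erase_of_mem (Finset.mem_image_of_mem f (Finset.mem_univ x)),
      Finset.card_image_of_injective _ hfinj]
    simp [hcard]
  -- N(a) = L and N(b) = L
  have hNa : G.neighborFinset a = L := by
    have hsub : L ⊆ G.neighborFinset a := by
      intro v hv
      rw [hL, Finset.mem_erase, Finset.mem_image] at hv
      obtain ⟨hne, y, _, rfl⟩ := hv.imp_right id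
      have hyx : y ≠ x := fun h => hv.1 (by rw [h])
      have := hleaf y hyx
      have ha : a ∈ G.neighborFinset (f y) := by rw [this]; simp
      rw [SimpleGraph.mem_neighborFinset] at ha ⊢
      exact ha.symm
    refine (Finset.eq_of_subset_of_card_le hsub ?_).symm
    rw [hLcard, SimpleGraph.card_neighborFinset_eq_degree, hda]
    
  have hNb : G.neighborFinset b = L := by
    have hsub : L ⊆ G.neighborFinset b := by
      intro v hv
      rw [hL, Finset.mem_erase, Finset.mem_image] at hv
      obtain ⟨hne, y, _, rfl⟩ := hv.imp_right id
      have hyx : y ≠ x := fun h => hv.1 (by rw [h])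
      have := hleaf y hyx
      have hb : b ∈ G.neighborFinset (f y) := by rw [this]; simp
      rw [SimpleGraph.mem_neighborFinset] at hb ⊢
      exact hb.symm
    refine (Finset.eq_of_subset_of_card_le hsub ?_).symm
    rw [hLcard, SimpleGraph.card_neighborFinset_eq_degree, hdb]
  -- the closed set T
  set T : Finset V := insert a (insert b (Finset.univ.image f)) with hT
  have hclosed : ∀ u v : V, u ∈ T → G.Adj u v → v ∈ T := by
    intro u v hu hadj
    rw [hT, Finset.mem_insert, Finset.mem_insert] at hu
    rcases hu with rfl | rfl | hu
    · have : v ∈ L := by rw [← hNa, SimpleGraph.mem_neighborFinset]; exact hadj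
      rw [hL] at this
      rw [hT]
      simp only [Finset.mem_insert]
      exact Or.inr (Or.inr (Finset.mem_of_mem_erase this))
    · have : v ∈ L := by rw [← hNb, SimpleGraph.mem_neighborFinset]; exact hadj
      rw [hL] at this
      rw [hT]
      simp only [Finset.mem_insert]
      exact Or.inr (Or.inr (Finset.mem_of_mem_erase this))
    · rw [Finset.mem_image] at hu
      obtain ⟨y, _, rfl⟩ := hu
      rcases hKclosed y v hadj with rfl | rfl | ⟨h, hs⟩
      · simp [hT]
      · simp [hT]
      · rw [hT]
        simp only [Finset.mem_insert]
        refine Or.inr (Or.inr ?_)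
        rw [Finset.mem_image]
        exact ⟨⟨⟨v, h⟩, hs⟩, Finset.mem_univ _, rfl⟩
  -- T is not everything
  have hTcard : T.card < Fintype.card V := by
    have h1 : T.card ≤ 2 + (Finset.univ.image f).card := by
      rw [hT]
      calc (insert a (insert b (Finset.univ.image f))).card
          ≤ (insert b (Finset.univ.image f)).card + 1 := Finset.card_insert_le _ _
        _ ≤ (Finset.univ.image f).card + 1 + 1 := by
            have := Finset.card_insert_le b (Finset.univ.image f)
            omega
        _ = 2 + (Finset.univ.image f).card := by omega
    have h2 : (Finset.univ.image f).card = 5 := by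
      rw [Finset.card_image_of_injective _ hfinj]
      simp [hcard]
    omega
  have hex : ∃ w, w ∉ T := by
    by_contra h
    push_neg at h
    have : T = Finset.univ := Finset.eq_univ_iff_forall.mpr h
    rw [this, Finset.card_univ] at hTcard
    omega
  obtain ⟨w, hw⟩ := hex
  intro hconn
  have hwalk : ∀ u v : V, G.Walk u v → u ∈ T → v ∈ T := by
    intro u v p
    induction p with
    | nil => exact id
    | cons h _ ih => intro hu; exact ih (hclosed _ _ hu h)
  obtain ⟨p⟩ := hconn.preconnected a w
  exact hw (hwalk a w p (by simp [hT]))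
end

section
/- Let G be a finite simple graph with 12 vertices, 21 edges, and minimum degree at least 3, and suppose that for every pair of distinct vertices a, b the induced subgraph G−a,b has at least 13 edges (equivalently, deg(a)+deg(b) ≤ 8 whenever a and b are non-adjacent, and deg(a)+deg(b) ≤ 9 whenever they are adjacent). Then the multiset of vertex degrees of G is (3^7,4^4,5) or (3^6,4^6). -/
open scoped Classical

/-!
Deleting two distinct vertices `a, b` removes `deg a + deg b` edges, or one fewer if `a ~ b`, so
the hypothesis forces `deg a + deg b ≤ 9` for every pair. The degrees are then twelve numbers
`≥ 3` summing to `42` with pairwise sums `≤ 9`. If some degree `d` is at least `5`, the other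
eleven lie in `[3, 9 - d]` and sum to `42 - d`, which forces `d = 5` and leaves seven `3`s and
four `4`s; otherwise all degrees are `3` or `4` and there are six of each.
-/

open Finset

namespace SimpleGraph

variable {V : Type*} [Fintype V] [DecidableEq V] (G : SimpleGraph V) [DecidableRel G.Adj]

lemma card_incidenceFinset_inter_le_one {a b : V} (hab : a ≠ b) :
    #(G.incidenceFinset a ∩ G.incidenceFinset b) ≤ 1 :=
  card_le_one.2 fun e he f hf => by
    rw [mem_inter, mem_incidenceFinset, mem_incidenceFinset] at he hf
    rw [G.incidenceSet_inter_incidenceSet_subset hab he,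
      G.incidenceSet_inter_incidenceSet_subset hab hf]

lemma card_edgeFinset_induce_compl_pair_add_degree_add_degree_le {a b : V} (hab : a ≠ b) :
    #(G.induce ({a, b}ᶜ : Set V)).edgeFinset + G.degree a + G.degree b ≤ #G.edgeFinset + 1 := by
  set A := G.incidenceFinset a
  set B := G.incidenceFinset b
  have hAB : A ∪ B ⊆ G.edgeFinset := union_subset (G.incidenceFinset_subset a)
    (G.incidenceFinset_subset b)
  have hinduce : G.edgeFinset ∩ ({a, b}ᶜ : Set V).toFinset.sym2 ⊆ G.edgeFinset \ (A ∪ B) := by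
    intro e he
    rw [mem_inter, mem_sym2_iff] at he
    refine mem_sdiff.2 ⟨he.1, fun hmem => ?_⟩
    rcases mem_union.1 hmem with h | h <;> rw [mem_incidenceFinset] at h
    · simpa using he.2 a h.2
    · simpa using he.2 b h.2
  have hcard := card_le_card hinduce
  rw [← map_edgeFinset_induce, card_map, card_sdiff_of_subset hAB] at hcard
  have hunion := card_union_add_card_inter A B
  have hinter : #(A ∩ B) ≤ 1 := G.card_incidenceFinset_inter_le_one hab
  have hAB_card := card_le_card hAB
  rw [card_incidenceFinset_eq_degree, card_incidenceFinset_eq_degree] at hunion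
  omega

end SimpleGraph

lemma Finset.exists_ne_of_mem_erase_map_val {α β : Type*} [DecidableEq α] [DecidableEq β]
    {s : Finset α} {f : α → β} {x y : β} (hx : x ∈ s.val.map f)
    (hy : y ∈ (s.val.map f).erase x) : ∃ a ∈ s, ∃ b ∈ s, a ≠ b ∧ f a = x ∧ f b = y := by
  obtain ⟨a, ha, rfl⟩ := Multiset.mem_map.1 hx
  rw [← Multiset.map_erase_of_mem f _ ha] at hy
  obtain ⟨b, hb, rfl⟩ := Multiset.mem_map.1 hy
  obtain ⟨hba, hb⟩ := (s.nodup.mem_erase_iff).1 hb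
  exact ⟨a, ha, b, hb, hba.symm, rfl, rfl⟩

lemma Multiset.eq_replicate_add_replicate_of_forall_eq_or_eq_succ {M : Multiset ℕ} {k p q : ℕ}
    (hM : ∀ x ∈ M, x = k ∨ x = k + 1) (hcard : card M = p + q)
    (hsum : M.sum = p * k + q * (k + 1)) : M = replicate p k + replicate q (k + 1) := by
  set L := M.filter (· = k)
  set U := M.filter (¬ · = k)
  have hLU : L + U = M := filter_add_not _ M
  have hL : L = replicate (card L) k := eq_replicate_card.2 fun x hx => (mem_filter.1 hx).2
  have hU : U = replicate (card U) (k + 1) := eq_replicate_card.2 fun x hx =>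
    (hM x (mem_filter.1 hx).1).resolve_left (mem_filter.1 hx).2
  have hcard' : card L + card U = p + q := by rw [← hcard, ← hLU, card_add]
  have hsum' : card L * k + card U * (k + 1) = p * k + q * (k + 1) := by
    rw [← hsum, ← hLU, sum_add, hL, hU, sum_replicate, sum_replicate, card_replicate,
      card_replicate, smul_eq_mul, smul_eq_mul]
  -- subtracting `k` times the cardinality from the sum counts the `k + 1`s
  have hU_card : card U = q := by
    have hk : (card L + card U) * k = (p + q) * k := by rw [hcard']
    linarith
  rw [← hLU, hL, hU, hU_card, show card L = p by omega]

lemma Multiset.eq_of_card_eq_12_of_sum_eq_42_of_add_le_9 {M : Multiset ℕ}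
    (hcard : card M = 12) (hsum : M.sum = 42) (hmin : ∀ x ∈ M, 3 ≤ x)
    (hpair : ∀ x ∈ M, ∀ y ∈ M.erase x, x + y ≤ 9) :
    M = ↑[3, 3, 3, 3, 3, 3, 3, 4, 4, 4, 4, 5] ∨ M = ↑[3, 3, 3, 3, 3, 3, 4, 4, 4, 4, 4, 4] := by
  by_cases hbig : ∃ x ∈ M, 5 ≤ x
  · obtain ⟨x, hx, hx5⟩ := hbig
    have hM : M = x ::ₘ M.erase x := (cons_erase hx).symm
    have hrest_card : card (M.erase x) = 11 := by
      rw [hM, card_cons] at hcard; omega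
    have hrest_sum : (M.erase x).sum + x = 42 := by
      rw [hM, sum_cons] at hsum; omega
    have hrest : ∀ y ∈ M.erase x, 3 ≤ y ∧ y ≤ 9 - x := fun y hy =>
      ⟨hmin y (mem_of_mem_erase hy), by have := hpair x hx y hy; omega⟩
    have hlower := card_nsmul_le_sum (s := M.erase x) (a := 3) fun y hy => (hrest y hy).1
    have hupper := sum_le_card_nsmul (M.erase x) (9 - x) fun y hy => (hrest y hy).2
    rw [hrest_card, smul_eq_mul] at hlower hupper
    obtain rfl : x = 5 := by omega
    left
    rw [hM, eq_replicate_add_replicate_of_forall_eq_or_eq_succ (k := 3) (p := 7) (q := 4)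
      (fun y hy => by have := hrest y hy; omega) hrest_card (by omega)]
    decide
  · push Not at hbig
    right
    rw [eq_replicate_add_replicate_of_forall_eq_or_eq_succ (k := 3) (p := 6) (q := 6)
      (fun y hy => by have := hmin y hy; have := hbig y hy; omega) hcard (by omega)]
    decide

/-- Let G be a finite simple graph with 12 vertices, 21 edges, and
minimum degree at least 3, such that for every pair of distinct vertices a, b
the induced subgraph G−a,b has at least 13 edges. Then the degree multiset of G
is (3^7,4^4,5) or (3^6,4^6). -/
theorem stmt_8 {V : Type*} [Fintype V] (G : SimpleGraph V)
    (hV : Fintype.card V = 12) (hE : G.edgeFinset.card = 21)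
    (hmin : ∀ v : V, 3 ≤ G.degree v)
    (hdel : ∀ a b : V, a ≠ b →
      13 ≤ (G.induce ({a, b}ᶜ : Set V)).edgeFinset.card) :
    (Finset.univ : Finset V).val.map (fun v => G.degree v) =
        (↑[3, 3, 3, 3, 3, 3, 3, 4, 4, 4, 4, 5] : Multiset ℕ) ∨
    (Finset.univ : Finset V).val.map (fun v => G.degree v) =
        (↑[3, 3, 3, 3, 3, 3, 4, 4, 4, 4, 4, 4] : Multiset ℕ) := by
  have hpair : ∀ a b : V, a ≠ b → G.degree a + G.degree b ≤ 9 := fun a b hab => by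
    have := G.card_edgeFinset_induce_compl_pair_add_degree_add_degree_le hab
    have := hdel a b hab
    omega
  apply Multiset.eq_of_card_eq_12_of_sum_eq_42_of_add_le_9
  · rw [Multiset.card_map, Finset.card_val, Finset.card_univ, hV]
  · rw [← Finset.sum_eq_multiset_sum, G.sum_degrees_eq_twice_card_edges, hE]
  · simpa using hmin
  · intro x hx y hy
    obtain ⟨a, -, b, -, hab, rfl, rfl⟩ := Finset.exists_ne_of_mem_erase_map_val hx hy
    exact hpair a b hab
end

section
/- Let G be a finite simple graph with 11 vertices, 21 edges, and minimum degree at least 3, and suppose that for every pair of distinct vertices a, b the induced subgraph G−a,b has at least 12 edges. Then any two vertices of degree 5 in G are adjacent, and any vertex of degree 6 is adjacent to every vertex of degree 4. -/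
open scoped Classical

open Finset

lemma key {V : Type*} [Fintype V] (G : SimpleGraph V) (a b : V) (hab : a ≠ b)
    (hadj : ¬ G.Adj a b) :
    (G.induce ({a, b}ᶜ : Set V)).edgeFinset.card + G.degree a + G.degree b
      ≤ G.edgeFinset.card := by
  classical
  set s : Set V := ({a, b}ᶜ : Set V)
  set T : Finset (Sym2 V) :=
    (G.induce s).edgeFinset.image (Sym2.map (Subtype.val : s → V)) with hT
  have hTcard : T.card = (G.induce s).edgeFinset.card := by
    apply Finset.card_image_of_injective
    exact Sym2.map.injective Subtype.val_injective
  have hTmem : ∀ e ∈ T, e ∈ G.edgeFinset ∧ a ∉ e ∧ b ∉ e := by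
    intro e he
    simp only [hT, Finset.mem_image] at he
    obtain ⟨e', he', rfl⟩ := he
    induction e' using Sym2.inductionOn with
    | hf x y =>
      rw [SimpleGraph.mem_edgeFinset, SimpleGraph.mem_edgeSet] at he'
      have hx := x.2; have hy := y.2
      simp only [s, Set.mem_compl_iff, Set.mem_insert_iff, Set.mem_singleton_iff] at hx hy
      refine ⟨?_, ?_, ?_⟩
      · simpa [SimpleGraph.mem_edgeFinset] using he'
      · simp only [Sym2.map_pair_eq, Sym2.mem_iff]
        rintro (h | h) <;> [exact hx (Or.inl h.symm); exact hy (Or.inl h.symm)]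
      · simp only [Sym2.map_pair_eq, Sym2.mem_iff]
        rintro (h | h) <;> [exact hx (Or.inr h.symm); exact hy (Or.inr h.symm)]
  have hAB : Disjoint (G.incidenceFinset a) (G.incidenceFinset b) := by
    rw [Finset.disjoint_left]
    intro e hea heb
    rw [SimpleGraph.mem_incidenceFinset] at hea heb
    exact hadj (G.adj_of_mem_incidenceSet hab hea heb)
  have hTA : Disjoint T (G.incidenceFinset a) := by
    rw [Finset.disjoint_left]
    intro e he hea
    rw [SimpleGraph.mem_incidenceFinset] at hea
    exact (hTmem e he).2.1 hea.2
  have hTB : Disjoint T (G.incidenceFinset b) := by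
    rw [Finset.disjoint_left]
    intro e he heb
    rw [SimpleGraph.mem_incidenceFinset] at heb
    exact (hTmem e he).2.2 heb.2
  have hsub : T ∪ G.incidenceFinset a ∪ G.incidenceFinset b ⊆ G.edgeFinset := by
    intro e he
    simp only [Finset.mem_union] at he
    rcases he with (he | he) | he
    · exact (hTmem e he).1
    · rw [SimpleGraph.mem_incidenceFinset] at he
      exact SimpleGraph.mem_edgeFinset.2 he.1
    · rw [SimpleGraph.mem_incidenceFinset] at he
      exact SimpleGraph.mem_edgeFinset.2 he.1
  calc (G.induce s).edgeFinset.card + G.degree a + G.degree b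
      = (T ∪ G.incidenceFinset a ∪ G.incidenceFinset b).card := by
        rw [Finset.card_union_of_disjoint, Finset.card_union_of_disjoint hTA,
          hTcard, G.card_incidenceFinset_eq_degree, G.card_incidenceFinset_eq_degree]
        exact Finset.disjoint_union_left.2 ⟨hTB, hAB⟩
    _ ≤ G.edgeFinset.card := Finset.card_le_card hsub


/-- Let G be a finite simple graph with 11 vertices, 21 edges, and
minimum degree at least 3, such that for every pair of distinct vertices a, b
the induced subgraph G−a,b has at least 12 edges. Then any two vertices of
degree 5 are adjacent, and any vertex of degree 6 is adjacent to every vertex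
of degree 4. -/
theorem stmt_11 {V : Type*} [Fintype V] (G : SimpleGraph V)
    (hV : Fintype.card V = 11) (hE : G.edgeFinset.card = 21)
    (hmin : ∀ v : V, 3 ≤ G.degree v)
    (hdel : ∀ a b : V, a ≠ b →
      12 ≤ (G.induce ({a, b}ᶜ : Set V)).edgeFinset.card) :
    (∀ u v : V, u ≠ v → G.degree u = 5 → G.degree v = 5 → G.Adj u v) ∧
    (∀ u v : V, G.degree u = 6 → G.degree v = 4 → G.Adj u v) := by
  constructor
  · intro u v huv h5u h5v
    by_contra hadj
    have := key G u v huv hadj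
    have := hdel u v huv
    omega
  · intro u v h6 h4
    have huv : u ≠ v := by rintro rfl; omega
    by_contra hadj
    have := key G u v huv hadj
    have := hdel u v huv
    omega
end

section
/- Let G be a finite simple graph with 11 vertices and 21 edges whose multiset of vertex degrees is (6,4^6,3^4), and suppose the vertex of degree 6 is adjacent to all six vertices of degree 4. Then G contains a triangle (three mutually adjacent vertices). -/
open scoped Classical

/-- Let G be a finite simple graph with 11 vertices and 21 edges
whose degree multiset is (6,4^6,3^4), and suppose the vertex of degree 6 is
adjacent to all six vertices of degree 4. Then G contains a triangle. -/
theorem stmt_12 {V : Type*} [Fintype V] (G : SimpleGraph V)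
    (hV : Fintype.card V = 11) (hE : G.edgeFinset.card = 21)
    (hdeg : (Finset.univ : Finset V).val.map (fun v => G.degree v) =
      (↑[3, 3, 3, 3, 4, 4, 4, 4, 4, 4, 6] : Multiset ℕ))
    (hadj : ∀ v w : V, G.degree v = 6 → G.degree w = 4 → G.Adj v w) :
    ∃ x y z : V, G.Adj x y ∧ G.Adj x z ∧ G.Adj y z := by
  by_contra hno
  push_neg at hno
  -- every degree is 3, 4, or 6
  have hmem : ∀ v : V, G.degree v = 3 ∨ G.degree v = 4 ∨ G.degree v = 6 := by
    intro v
    have : G.degree v ∈ (Finset.univ : Finset V).val.map (fun v => G.degree v) :=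
      Multiset.mem_map_of_mem _ (Finset.mem_univ v)
    rw [hdeg] at this
    simpa using this
  -- counting formula
  have key : ∀ n : ℕ, (Finset.univ.filter (fun v => G.degree v = n)).card
      = Multiset.count n ((↑[3, 3, 3, 3, 4, 4, 4, 4, 4, 4, 6] : Multiset ℕ)) := by
    intro n
    rw [← hdeg, Multiset.count_map]
    simp only [Finset.card, Finset.filter_val]
    congr 1
    exact Multiset.filter_congr (fun x _ => by constructor <;> exact fun h => h.symm)
  set A : Finset V := Finset.univ.filter (fun v => G.degree v = 4) with hA
  set B : Finset V := Finset.univ.filter (fun v => G.degree v = 3) with hB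
  have hAcard : A.card = 6 := by rw [hA, key]; decide
  have hBcard : B.card = 4 := by rw [hB, key]; decide
  have hUcard : (Finset.univ.filter (fun v => G.degree v = 6)).card = 1 := by
    rw [key]; decide
  obtain ⟨u, hu⟩ := Finset.card_eq_one.mp hUcard
  have hudeg : G.degree u = 6 := by
    have : u ∈ Finset.univ.filter (fun v => G.degree v = 6) := by rw [hu]; simp
    simpa using this
  have huniq : ∀ w : V, G.degree w = 6 → w = u := by
    intro w hw
    have : w ∈ Finset.univ.filter (fun v => G.degree v = 6) := by simp [hw]
    rw [hu] at this; simpa using this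
  -- lower bound: each a ∈ A has ≥ 3 neighbors in B
  have hlow : ∀ a ∈ A, 3 ≤ (B.bipartiteAbove G.Adj a).card := by
    intro a ha
    have hadeg : G.degree a = 4 := by simpa [hA] using ha
    have hsub : (G.neighborFinset a).erase u ⊆ B.bipartiteAbove G.Adj a := by
      intro w hw
      rw [Finset.mem_erase, SimpleGraph.mem_neighborFinset] at hw
      obtain ⟨hwu, haw⟩ := hw
      rcases hmem w with h3 | h4 | h6
      · exact Finset.mem_filter.mpr ⟨Finset.mem_filter.mpr ⟨Finset.mem_univ w, h3⟩, haw⟩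
      · exfalso
        exact hno u a w (hadj u a hudeg hadeg) (hadj u w hudeg h4) haw
      · exact absurd (huniq w h6) hwu
    calc 3 = (G.neighborFinset a).card - 1 := by
              rw [SimpleGraph.card_neighborFinset_eq_degree, hadeg]
      _ ≤ ((G.neighborFinset a).erase u).card := Finset.pred_card_le_card_erase
      _ ≤ (B.bipartiteAbove G.Adj a).card := Finset.card_le_card hsub
  -- upper bound: each b ∈ B has ≤ 3 neighbors in A
  have hhigh : ∀ b ∈ B, (A.bipartiteBelow G.Adj b).card ≤ 3 := by
    intro b hb
    have hbdeg : G.degree b = 3 := by simpa [hB] using hb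
    have hsub : A.bipartiteBelow G.Adj b ⊆ G.neighborFinset b := by
      intro a ha
      rw [Finset.mem_bipartiteBelow] at ha
      rw [SimpleGraph.mem_neighborFinset]
      exact ha.2.symm
    calc (A.bipartiteBelow G.Adj b).card ≤ (G.neighborFinset b).card :=
          Finset.card_le_card hsub
      _ = 3 := by rw [SimpleGraph.card_neighborFinset_eq_degree, hbdeg]
  have := Finset.card_nsmul_le_card_nsmul G.Adj hlow hhigh
  rw [hAcard, hBcard] at this
  simp [smul_eq_mul] at this
end

section
/- Let G be a finite simple graph with 10 vertices, 21 edges, and minimum degree at least 3, and suppose that for every pair of distinct vertices a, b the induced subgraph G−a,b has at least 12 edges. Then the multiset of vertex degrees of G is one of (5^6,3^4), (5^5,4^2,3^3), (5^4,4^4,3^2), (5^3,4^6,3), or (5^2,4^8). -/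
/-!
Counting the edges of `G - a, b` gives `deg a + deg b ≤ 9 + [a ~ b]` for `a ≠ b`. Summing over
`b ≠ a` bounds the degree sum `42` by `2 deg a + 9 (9 - deg a)`, which forces `deg a ≤ 5`. Ten
degrees in `{3, 4, 5}` summing to `42` leave exactly the five listed distributions.
-/

open scoped Classical

open Finset

namespace SimpleGraph

variable {V : Type*} [Fintype V] (G : SimpleGraph V)

theorem card_incidenceFinset_inter_incidenceFinset {a b : V} (hab : a ≠ b) :
    #(G.incidenceFinset a ∩ G.incidenceFinset b) = if G.Adj a b then 1 else 0 := by
  rw [incidenceFinset, incidenceFinset, ← Set.toFinset_inter, Set.toFinset_card]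
  split_ifs with h
  · simp [incidenceSet_inter_incidenceSet_of_adj G h]
  · simp [incidenceSet_inter_incidenceSet_of_not_adj G h hab]

theorem card_edgeFinset_induce_compl_pair {a b : V} (hab : a ≠ b) :
    #(G.induce ({a, b}ᶜ : Set V)).edgeFinset + G.degree a + G.degree b =
      #G.edgeFinset + if G.Adj a b then 1 else 0 := by
  have hinduce : #(G.induce ({a, b}ᶜ : Set V)).edgeFinset =
      #{e ∈ G.edgeFinset | ¬(a ∈ e ∨ b ∈ e)} := by
    have := congrArg Finset.card (G.map_edgeFinset_induce (s := ({a, b}ᶜ : Set V)))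
    rw [card_map] at this
    rw [this, ← filter_mem_eq_inter]
    congr 1
    refine Finset.filter_congr fun e _ => ?_
    induction e using Sym2.ind
    simp only [Set.toFinset_compl, Set.toFinset_insert, Set.toFinset_singleton, compl_insert,
      mem_sym2_iff, Sym2.mem_iff, mem_erase, mem_compl, mem_singleton, forall_eq_or_imp,
      forall_eq, not_or]
    tauto
  have hincident : #{e ∈ G.edgeFinset | a ∈ e ∨ b ∈ e} + (if G.Adj a b then 1 else 0) =
      G.degree a + G.degree b := by
    rw [filter_or, ← incidenceFinset_eq_filter, ← incidenceFinset_eq_filter,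
      ← card_incidenceFinset_inter_incidenceFinset G hab, card_union_add_card_inter,
      card_incidenceFinset_eq_degree, card_incidenceFinset_eq_degree]
  have := card_filter_add_card_filter_not (s := G.edgeFinset) (fun e => a ∈ e ∨ b ∈ e)
  omega

theorem sum_degrees_le_of_degree_add_degree_le {k : ℕ}
    (h : ∀ a b, a ≠ b → G.degree a + G.degree b ≤ k + if G.Adj a b then 1 else 0) (a : V) :
    ∑ v, G.degree v ≤ 2 * G.degree a + (Fintype.card V - 1) * (k - G.degree a) := by
  have hnbr : #{v ∈ univ.erase a | G.Adj a v} = G.degree a := by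
    rw [← card_neighborFinset_eq_degree, neighborFinset_eq_filter, filter_erase,
      erase_eq_of_notMem (by simp)]
  calc ∑ v, G.degree v = G.degree a + ∑ v ∈ univ.erase a, G.degree v :=
        (add_sum_erase _ _ (mem_univ a)).symm
    _ ≤ G.degree a + ∑ v ∈ univ.erase a, ((k - G.degree a) + if G.Adj a v then 1 else 0) := by
        gcongr with v hv
        have := h a v (ne_of_mem_erase hv).symm
        omega
    _ = 2 * G.degree a + (Fintype.card V - 1) * (k - G.degree a) := by
        rw [sum_add_distrib, sum_const, card_erase_of_mem (mem_univ a), card_univ, smul_eq_mul,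
          sum_boole, hnbr]
        push_cast
        ring

end SimpleGraph

theorem Multiset.eq_sum_count_nsmul_of_forall_mem {α : Type*} [DecidableEq α] {M : Multiset α}
    {s : Finset α} (h : ∀ x ∈ M, x ∈ s) : M = ∑ x ∈ s, M.count x • {x} := by
  ext y
  by_cases hy : y ∈ s
  · simp [Multiset.count_sum', Multiset.count_singleton, hy]
  · simpa [hy] using mt (h y) hy

theorem Multiset.eq_of_card_eq_ten_of_sum_eq_fortyTwo {M : Multiset ℕ}
    (hcard : Multiset.card M = 10) (hsum : M.sum = 42) (hmem : ∀ x ∈ M, 3 ≤ x ∧ x ≤ 5) :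
    M = ↑[3, 3, 3, 3, 5, 5, 5, 5, 5, 5] ∨ M = ↑[3, 3, 3, 4, 4, 5, 5, 5, 5, 5] ∨
      M = ↑[3, 3, 4, 4, 4, 4, 5, 5, 5, 5] ∨ M = ↑[3, 4, 4, 4, 4, 4, 4, 5, 5, 5] ∨
      M = ↑[4, 4, 4, 4, 4, 4, 4, 4, 5, 5] := by
  have hM := Multiset.eq_sum_count_nsmul_of_forall_mem (s := {3, 4, 5}) (M := M) fun x hx => by
    have := hmem x hx; simp; omega
  simp only [mem_insert, Finset.mem_singleton, Nat.reduceEqDiff, or_self, not_false_eq_true,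
    sum_insert, Finset.sum_singleton] at hM
  rw [hM] at hcard hsum ⊢
  simp only [card_add, card_nsmul, card_singleton, mul_one, sum_add, sum_nsmul, sum_singleton,
    smul_eq_mul] at hcard hsum
  generalize M.count 3 = c₃, M.count 4 = c₄, M.count 5 = c₅ at hcard hsum ⊢
  obtain ⟨rfl, rfl⟩ : c₃ = c₅ - 2 ∧ c₄ = 12 - 2 * c₅ := by omega
  obtain ⟨h₂, h₆⟩ : 2 ≤ c₅ ∧ c₅ ≤ 6 := by omega
  interval_cases c₅ <;> decide

/-- Let G be a finite simple graph with 10 vertices, 21 edges, and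
minimum degree at least 3, such that for every pair of distinct vertices a, b
the induced subgraph G−a,b has at least 12 edges. Then the degree multiset of G
is one of (5^6,3^4), (5^5,4^2,3^3), (5^4,4^4,3^2), (5^3,4^6,3), or (5^2,4^8). -/
theorem stmt_15 {V : Type*} [Fintype V] (G : SimpleGraph V)
    (hV : Fintype.card V = 10) (hE : G.edgeFinset.card = 21)
    (hmin : ∀ v : V, 3 ≤ G.degree v)
    (hdel : ∀ a b : V, a ≠ b →
      12 ≤ (G.induce ({a, b}ᶜ : Set V)).edgeFinset.card) :
    (Finset.univ : Finset V).val.map (fun v => G.degree v) =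
        (↑[3, 3, 3, 3, 5, 5, 5, 5, 5, 5] : Multiset ℕ) ∨
    (Finset.univ : Finset V).val.map (fun v => G.degree v) =
        (↑[3, 3, 3, 4, 4, 5, 5, 5, 5, 5] : Multiset ℕ) ∨
    (Finset.univ : Finset V).val.map (fun v => G.degree v) =
        (↑[3, 3, 4, 4, 4, 4, 5, 5, 5, 5] : Multiset ℕ) ∨
    (Finset.univ : Finset V).val.map (fun v => G.degree v) =
        (↑[3, 4, 4, 4, 4, 4, 4, 5, 5, 5] : Multiset ℕ) ∨
    (Finset.univ : Finset V).val.map (fun v => G.degree v) =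
        (↑[4, 4, 4, 4, 4, 4, 4, 4, 5, 5] : Multiset ℕ) := by
  have hsum : ∑ v, G.degree v = 42 := by rw [G.sum_degrees_eq_twice_card_edges, hE]
  have hpair : ∀ a b, a ≠ b → G.degree a + G.degree b ≤ 9 + if G.Adj a b then 1 else 0 :=
    fun a b hab => by
      have := G.card_edgeFinset_induce_compl_pair hab
      have := hdel a b hab
      omega
  have hmax : ∀ v, G.degree v ≤ 5 := fun v => by
    have hbound := G.sum_degrees_le_of_degree_add_degree_le hpair v
    have hlt := G.degree_lt_card_verts v
    rw [hsum, hV] at hbound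
    omega
  apply Multiset.eq_of_card_eq_ten_of_sum_eq_fortyTwo
  · rw [Multiset.card_map, ← Finset.card_def, Finset.card_univ, hV]
  · exact hsum
  · simpa using fun v => ⟨hmin v, hmax v⟩
end

section
/- Let G be a triangle-free finite simple graph on 10 vertices with two adjacent vertices a and b of degree 5 such that every other vertex has degree 4. Then a and b have no common neighbor, every vertex other than a and b is adjacent to exactly one of a and b, the induced subgraph G−a,b is 3-regular, and every edge of G−a,b joins a neighbor of a to a neighbor of b (so G−a,b is bipartite with parts N(a)∖{b} and N(b)∖{a}, each of size 4). -/
/-!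
Since `a` and `b` are adjacent and `G` is triangle-free, their neighbourhoods are disjoint; their
sizes add up to `5 + 5 = 10 = |V|`, so they partition `V`. Hence every other vertex `x` sees exactly
one of `a`, `b` and loses exactly one of its four edges in `G - a,b`, and an edge `xy` of `G - a,b`
whose ends saw the same vertex of `{a, b}` would close a triangle.
-/

open scoped Classical

open Finset

namespace SimpleGraph

variable {V : Type*} {G : SimpleGraph V}

theorem CliqueFree.not_adj_of_adj_of_adj (hG : G.CliqueFree 3) {u v w : V}
    (hu : G.Adj w u) (hv : G.Adj w v) : ¬G.Adj u v := fun huv =>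
  isIndepSet_neighborSet_of_triangleFree G hG w hu hv huv.ne huv

theorem adj_or_adj_of_degree_add_degree_eq_card [Fintype V] [DecidableRel G.Adj] {a b : V}
    (hdisj : ∀ c, ¬(G.Adj a c ∧ G.Adj b c)) (hcard : G.degree a + G.degree b = Fintype.card V)
    (v : V) : G.Adj a v ∨ G.Adj b v := by
  have hdisj' : Disjoint (G.neighborFinset a) (G.neighborFinset b) :=
    Finset.disjoint_left.mpr fun c hca hcb => hdisj c ⟨by simpa using hca, by simpa using hcb⟩
  have hunion : G.neighborFinset a ∪ G.neighborFinset b = univ :=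
    eq_univ_of_card _ (by rw [card_union_of_disjoint hdisj']; exact hcard)
  have hv : v ∈ G.neighborFinset a ∪ G.neighborFinset b := hunion ▸ mem_univ v
  simpa using hv

theorem degree_induce_compl_add_card_inter [Fintype V] [DecidableRel G.Adj] {s : Set V}
    [DecidablePred (· ∈ s)] (v : ↥sᶜ) :
    (G.induce sᶜ).degree v + #(G.neighborFinset v ∩ s.toFinset) = G.degree v := by
  simp_rw [← card_neighborFinset_eq_degree]
  rw [← card_map, map_neighborFinset_induce, Set.toFinset_compl,
    ← sdiff_eq_inter_compl, card_sdiff_add_card_inter]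

theorem card_neighborFinset_inter_pair_eq_one [Fintype V] [DecidableRel G.Adj] [DecidableEq V]
    {a b x : V} (h : Xor (G.Adj a x) (G.Adj b x)) : #(G.neighborFinset x ∩ {a, b}) = 1 := by
  rcases h with ⟨ha, hb⟩ | ⟨hb, ha⟩
  · rw [Finset.card_eq_one]; exact ⟨a, by ext; aesop (add simp adj_comm)⟩
  · rw [Finset.card_eq_one]; exact ⟨b, by ext; aesop (add simp adj_comm)⟩

end SimpleGraph

theorem stmt_16_general {V : Type*} [Fintype V] (G : SimpleGraph V)
    (htf : G.CliqueFree 3) (hV : Fintype.card V = 10)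
    (a b : V) (hadj : G.Adj a b)
    (hda : G.degree a = 5) (hdb : G.degree b = 5)
    (hother : ∀ v : V, v ≠ a → v ≠ b → G.degree v = 4) :
    (∀ c : V, ¬ (G.Adj a c ∧ G.Adj b c)) ∧
    (∀ v : V, v ≠ a → v ≠ b → Xor' (G.Adj a v) (G.Adj b v)) ∧
    (∀ x : ({a, b}ᶜ : Set V), (G.induce ({a, b}ᶜ : Set V)).degree x = 3) ∧
    (∀ x y : ({a, b}ᶜ : Set V), (G.induce ({a, b}ᶜ : Set V)).Adj x y →
      (G.Adj a x.1 ∧ G.Adj b y.1) ∨ (G.Adj b x.1 ∧ G.Adj a y.1)) := by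
  have hnc : ∀ c, ¬(G.Adj a c ∧ G.Adj b c) := fun c ⟨hac, hbc⟩ =>
    htf.not_adj_of_adj_of_adj hadj hac hbc
  have hcover : ∀ v, G.Adj a v ∨ G.Adj b v :=
    SimpleGraph.adj_or_adj_of_degree_add_degree_eq_card hnc (by rw [hda, hdb, hV])
  have hxor : ∀ v, Xor (G.Adj a v) (G.Adj b v) := fun v =>
    (xor_iff_or_and_not_and _ _).mpr ⟨hcover v, hnc v⟩
  refine ⟨hnc, fun v _ _ => hxor v, fun x => ?_, ?_⟩
  · have hx := SimpleGraph.degree_induce_compl_add_card_inter (G := G) (s := {a, b}) x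
    simp only [Set.toFinset_insert, Set.toFinset_singleton] at hx
    rw [SimpleGraph.card_neighborFinset_inter_pair_eq_one (hxor x),
      hother x (fun h => x.2 (.inl h)) (fun h => x.2 (.inr h))] at hx
    omega
  · rintro ⟨x, -⟩ ⟨y, -⟩ (hxy : G.Adj x y)
    rcases hcover x with hax | hbx <;> rcases hcover y with hay | hby
    · exact absurd hxy (htf.not_adj_of_adj_of_adj hax hay)
    · exact .inl ⟨hax, hby⟩
    · exact .inr ⟨hbx, hay⟩
    · exact absurd hxy (htf.not_adj_of_adj_of_adj hbx hby)

/-- Let G be a triangle-free finite simple graph on 10 vertices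
with two adjacent vertices a and b of degree 5 such that every other vertex has
degree 4. Then a and b have no common neighbor, every other vertex is adjacent
to exactly one of a and b, the induced subgraph G−a,b is 3-regular, and every
edge of G−a,b joins a neighbor of a to a neighbor of b. -/
theorem stmt_16 {V : Type*} [Fintype V] (G : SimpleGraph V)
    (htf : G.CliqueFree 3) (hV : Fintype.card V = 10)
    (a b : V) (hab : a ≠ b) (hadj : G.Adj a b)
    (hda : G.degree a = 5) (hdb : G.degree b = 5)
    (hother : ∀ v : V, v ≠ a → v ≠ b → G.degree v = 4) :
    (∀ c : V, ¬ (G.Adj a c ∧ G.Adj b c)) ∧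
    (∀ v : V, v ≠ a → v ≠ b → Xor' (G.Adj a v) (G.Adj b v)) ∧
    (∀ x : ({a, b}ᶜ : Set V), (G.induce ({a, b}ᶜ : Set V)).degree x = 3) ∧
    (∀ x y : ({a, b}ᶜ : Set V), (G.induce ({a, b}ᶜ : Set V)).Adj x y →
      (G.Adj a x.1 ∧ G.Adj b y.1) ∨ (G.Adj b x.1 ∧ G.Adj a y.1)) :=
  stmt_16_general G htf hV a b hadj hda hdb hother
end
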